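/- arXiv:1601.07509 — 4 statements merged into one kernel-verified Lean document; each statement's English description precedes it below -/
import Mathlib

section
/- Let X be a real Hilbert space, let Σ = [a,b] be a compact interval of real numbers, and let {Π_s}_{s∈Σ} be a family of orthogonal projections on X (bounded idempotent self-adjoint operators) such that the map s ↦ Π_s belongs to C^k(Σ; B(X)) for some k ∈ {0,1,2,…}. Then for every s₀ ∈ Σ there exist a relatively open neighborhood Σ₀ of s₀ in Σ and a family of bounded operators R_s from ran(Π_{s₀}) into ker(Π_{s₀}) such that the map s ↦ R_s is in C^k(Σ₀; B(ran(Π_{s₀}), ker(Π_{s₀}))), the range of Π_s equals the graph {q + R_s q : q ∈ ran(Π_{s₀})} for every s ∈ Σ₀, and ‖R_s‖ → 0 as s → s₀. -/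
/-!
Write `P₀ = Π_{s₀}`, `V = ran P₀`, `W = ker P₀`, and cut `Π_s` into blocks along `X = V ⊕ W`.
The `V → V` block `A_s` is the identity at `s₀`, so it is invertible near `s₀`, and
`R_s = (W-block of Π_s on V) ∘ A_s⁻¹` is `C^k` because inversion is analytic on the units of
the Banach algebra `B(V)`. The graph of `R_s` is `Π_s A_s⁻¹ (V) ⊆ ran Π_s`, and it is all of
`ran Π_s` as long as `‖Π_s - P₀‖ < 1`, since then no nonzero vector of `ran Π_s` lies in `W`.
-/

open Filter Topology

section

variable {𝕜 E : Type*} [NontriviallyNormedField 𝕜] [NormedAddCommGroup E] [NormedSpace 𝕜 E]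

theorem ContinuousLinearMap.IsIdempotentElem.disjoint_range_ker_of_norm_sub_lt_one
    {P Q : E →L[𝕜] E} (hQ : IsIdempotentElem Q) (hPQ : ‖Q - P‖ < 1) :
    Disjoint (LinearMap.range (Q : E →ₗ[𝕜] E)) (LinearMap.ker (P : E →ₗ[𝕜] E)) := by
  refine Submodule.disjoint_def.mpr fun x hxQ hxP ↦ norm_eq_zero.mp ?_
  have hQx : Q x = x :=
    (LinearMap.IsIdempotentElem.mem_range_iff (IsIdempotentElem.toLinearMap hQ)).mp hxQ
  have hPx : P x = 0 := hxP
  have hle : ‖x‖ ≤ ‖Q - P‖ * ‖x‖ :=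
    calc ‖x‖ = ‖(Q - P) x‖ := by rw [sub_apply, hQx, hPx, sub_zero]
      _ ≤ ‖Q - P‖ * ‖x‖ := (Q - P).le_opNorm x
  nlinarith [norm_nonneg x]

namespace Submodule.IsTopCompl

variable {V W : Submodule 𝕜 E} (h : IsTopCompl V W)

noncomputable def compression (T : E →L[𝕜] E) : V →L[𝕜] V :=
  V.projectionOntoL W h ∘L T ∘L V.subtypeL

/-- When `compression T` is invertible, `T (V)` is the graph of this map `V → W`:
`T (A⁻¹ v) = v + graphOperator T v` for `A = compression T`. -/
noncomputable def graphOperator (T : E →L[𝕜] E) : V →L[𝕜] W :=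
  W.projectionOntoL V h.symm ∘L T ∘L V.subtypeL ∘L Ring.inverse (h.compression T)

theorem continuous_compression : Continuous h.compression := by
  unfold compression; fun_prop

theorem isOpen_setOf_isUnit_compression [CompleteSpace V] :
    IsOpen {T | IsUnit (h.compression T)} :=
  Units.isOpen.preimage h.continuous_compression

theorem compression_eq_one {T : E →L[𝕜] E} (hT : ∀ v ∈ V, T v = v) : h.compression T = 1 := by
  ext v
  simp [compression, hT v v.2, Submodule.projectionOntoL_apply_left]

theorem graphOperator_eq_zero {T : E →L[𝕜] E} (hT : ∀ v ∈ V, T v = v) :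
    h.graphOperator T = 0 := by
  ext v
  simp [graphOperator, hT _ (Ring.inverse (h.compression T) v).2]

theorem compression_apply_inverse_apply {T : E →L[𝕜] E} (hT : IsUnit (h.compression T))
    (v : V) : h.compression T (Ring.inverse (h.compression T) v) = v := by
  rw [← mul_apply_eq_comp, Ring.mul_inverse_cancel _ hT, one_apply_eq_self]

theorem add_graphOperator_apply {T : E →L[𝕜] E} (hT : IsUnit (h.compression T)) (v : V) :
    (v : E) + h.graphOperator T v = T (Ring.inverse (h.compression T) v) := by
  nth_rw 1 [← h.compression_apply_inverse_apply hT v]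
  exact V.projectionL_add_projectionL_eq_self h _

theorem range_eq_graph {T : E →L[𝕜] E} (hT : IsUnit (h.compression T))
    (hTW : Disjoint (LinearMap.range (T : E →ₗ[𝕜] E)) W) :
    Set.range T = {x : E | ∃ v : V, x = (v : E) + (h.graphOperator T v : E)} := by
  ext x
  constructor
  · rintro ⟨y, rfl⟩
    set v := V.projectionOntoL W h (T y)
    set u : E := ↑(Ring.inverse (h.compression T) v)
    have hW : T y - T u ∈ W := by
      rw [← V.projectionOntoL_apply_eq_zero_iff h, map_sub, sub_eq_zero]
      exact (h.compression_apply_inverse_apply hT v).symm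
    have hrange : T y - T u ∈ LinearMap.range (T : E →ₗ[𝕜] E) := ⟨y - u, map_sub T y u⟩
    refine ⟨v, ?_⟩
    rw [h.add_graphOperator_apply hT v]
    exact sub_eq_zero.mp (Submodule.disjoint_def.mp hTW _ hrange hW)
  · rintro ⟨v, rfl⟩
    exact ⟨_, (h.add_graphOperator_apply hT v).symm⟩

variable {F : Type*} [NormedAddCommGroup F] [NormedSpace 𝕜 F] {f : F → E →L[𝕜] E} {s : Set F}
  {n : WithTop ℕ∞}

theorem _root_.ContDiffOn.compression (hf : ContDiffOn 𝕜 n f s) :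
    ContDiffOn 𝕜 n (fun x ↦ h.compression (f x)) s :=
  contDiffOn_const.clm_comp (hf.clm_comp contDiffOn_const)

theorem _root_.ContDiffOn.graphOperator [CompleteSpace V] (hf : ContDiffOn 𝕜 n f s)
    (hunit : ∀ x ∈ s, IsUnit (h.compression (f x))) :
    ContDiffOn 𝕜 n (fun x ↦ h.graphOperator (f x)) s := by
  have hinv : ContDiffOn 𝕜 n (fun x ↦ Ring.inverse (h.compression (f x))) s := fun x hx ↦ by
    have hinvAt := contDiffAt_ringInverse 𝕜 (n := n) (hunit x hx).unit
    rw [IsUnit.unit_spec] at hinvAt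
    exact hinvAt.comp_contDiffWithinAt x (hf.compression h x hx)
  exact contDiffOn_const.clm_comp (hf.clm_comp (contDiffOn_const.clm_comp hinv))

end Submodule.IsTopCompl

end

theorem graph_representation_of_Ck_family_of_orthogonal_projections_general
    {X : Type*} [NormedAddCommGroup X] [InnerProductSpace ℝ X] [CompleteSpace X]
    (a b : ℝ) (k : ℕ) (Pr : ℝ → X →L[ℝ] X)
    (hidem : ∀ s ∈ Set.Icc a b, Pr s ∘L Pr s = Pr s)
    (hsmooth : ContDiffOn ℝ k Pr (Set.Icc a b)) :
    ∀ s₀ ∈ Set.Icc a b, ∃ S₀ : Set ℝ,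
      s₀ ∈ S₀ ∧ S₀ ⊆ Set.Icc a b ∧
      (∃ U : Set ℝ, IsOpen U ∧ S₀ = U ∩ Set.Icc a b) ∧
      ∃ R : ℝ → (LinearMap.range (Pr s₀ : X →ₗ[ℝ] X) →L[ℝ] LinearMap.ker (Pr s₀ : X →ₗ[ℝ] X)),
        ContDiffOn ℝ k R S₀ ∧
        (∀ s ∈ S₀, Set.range (Pr s) =
          {x : X | ∃ q : LinearMap.range (Pr s₀ : X →ₗ[ℝ] X), x = (q : X) + ((R s q : LinearMap.ker (Pr s₀ : X →ₗ[ℝ] X)) : X)}) ∧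
        Tendsto (fun s => ‖R s‖) (𝓝[S₀] s₀) (𝓝 0) := by
  intro s₀ hs₀
  have hP₀ : IsIdempotentElem (Pr s₀) := hidem s₀ hs₀
  have h := ContinuousLinearMap.IsIdempotentElem.isTopCompl hP₀
  have : CompleteSpace (LinearMap.range (Pr s₀ : X →ₗ[ℝ] X)) :=
    (ContinuousLinearMap.IsIdempotentElem.isClosed_range hP₀).completeSpace_coe
  have hfix : ∀ v ∈ LinearMap.range (Pr s₀ : X →ₗ[ℝ] X), Pr s₀ v = v := fun v hv ↦
    (LinearMap.IsIdempotentElem.mem_range_iff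
      (ContinuousLinearMap.IsIdempotentElem.toLinearMap hP₀)).mp hv
  have hnear : Pr ⁻¹' ({T | IsUnit (h.compression T)} ∩ Metric.ball (Pr s₀) 1)
      ∈ 𝓝[Set.Icc a b] s₀ := by
    refine (hsmooth.continuousOn s₀ hs₀).preimage_mem_nhdsWithin
      ((h.isOpen_setOf_isUnit_compression.inter Metric.isOpen_ball).mem_nhds ⟨?_, ?_⟩)
    · simp only [Set.mem_ofPred_eq, h.compression_eq_one hfix, isUnit_one]
    · exact Metric.mem_ball_self one_pos
  obtain ⟨U, hUo, hs₀U, hU⟩ := mem_nhdsWithin.mp hnear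
  have hS₀ : ∀ s ∈ U ∩ Set.Icc a b, IsUnit (h.compression (Pr s)) ∧ ‖Pr s - Pr s₀‖ < 1 :=
    fun s hs ↦ ⟨(hU hs).1, mem_ball_iff_norm.mp (hU hs).2⟩
  have hR : ContDiffOn ℝ k (fun s ↦ h.graphOperator (Pr s)) (U ∩ Set.Icc a b) :=
    (hsmooth.mono Set.inter_subset_right).graphOperator h fun s hs ↦ (hS₀ s hs).1
  refine ⟨U ∩ Set.Icc a b, ⟨hs₀U, hs₀⟩, Set.inter_subset_right, ⟨U, hUo, rfl⟩, _, hR,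
    fun s hs ↦ h.range_eq_graph (hS₀ s hs).1
      (ContinuousLinearMap.IsIdempotentElem.disjoint_range_ker_of_norm_sub_lt_one
        (hidem s hs.2) (hS₀ s hs).2), ?_⟩
  have hR₀ : h.graphOperator (Pr s₀) = 0 := h.graphOperator_eq_zero hfix
  exact (tendsto_zero_iff_norm_tendsto_zero (f := fun s ↦ h.graphOperator (Pr s))).mp
    (hR₀ ▸ (hR.continuousOn s₀ ⟨hs₀U, hs₀⟩).tendsto)

/-- **Existence of graph representations for a `C^k` family of orthogonal projections**
(Lemma 3.2 / `crossex` of the paper). Given a family `Π_s` of orthogonal projections on a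
real Hilbert space `X`, depending `C^k`-smoothly on `s ∈ [a,b]`, near each `s₀` the range of
`Π_s` is the graph of a `C^k` family of bounded operators
`R_s : ran(Π_{s₀}) → ker(Π_{s₀})` with `‖R_s‖ → 0` as `s → s₀`. -/
theorem graph_representation_of_Ck_family_of_orthogonal_projections
    {X : Type*} [NormedAddCommGroup X] [InnerProductSpace ℝ X] [CompleteSpace X]
    (a b : ℝ) (k : ℕ) (Pr : ℝ → X →L[ℝ] X)
    (hidem : ∀ s ∈ Set.Icc a b, Pr s ∘L Pr s = Pr s)
    (hsa : ∀ s ∈ Set.Icc a b, ContinuousLinearMap.adjoint (Pr s) = Pr s)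
    (hsmooth : ContDiffOn ℝ k Pr (Set.Icc a b)) :
    ∀ s₀ ∈ Set.Icc a b, ∃ S₀ : Set ℝ,
      s₀ ∈ S₀ ∧ S₀ ⊆ Set.Icc a b ∧
      (∃ U : Set ℝ, IsOpen U ∧ S₀ = U ∩ Set.Icc a b) ∧
      ∃ R : ℝ → (LinearMap.range (Pr s₀ : X →ₗ[ℝ] X) →L[ℝ] LinearMap.ker (Pr s₀ : X →ₗ[ℝ] X)),
        ContDiffOn ℝ k R S₀ ∧
        (∀ s ∈ S₀, Set.range (Pr s) =
          {x : X | ∃ q : LinearMap.range (Pr s₀ : X →ₗ[ℝ] X), x = (q : X) + ((R s q : LinearMap.ker (Pr s₀ : X →ₗ[ℝ] X)) : X)}) ∧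
        Tendsto (fun s => ‖R s‖) (𝓝[S₀] s₀) (𝓝 0) :=
  graph_representation_of_Ck_family_of_orthogonal_projections_general a b k Pr hidem hsmooth
end

section
/- Let X be a real Hilbert space and let J ∈ B(X) satisfy J* = −J and J² = −I, and define the symplectic form ω(u,v) = ⟨Ju, v⟩ for u, v ∈ X. Let V be a closed subspace of X with orthogonal complement W, let s₀ ∈ ℝ, and let s ↦ R_s ∈ B(V, W) be a family of bounded operators, defined for s in a neighborhood of s₀, that is differentiable at s₀ in the operator norm and satisfies R_{s₀} = 0. Assume that for every s in this neighborhood the graph {q + R_s q : q ∈ V} is isotropic for ω, i.e. ω(q + R_s q, p + R_s p) = 0 for all q, p ∈ V. Then the bilinear form m(q,p) := ω(q, Ṙ(s₀) p) on V, where Ṙ(s₀) denotes the derivative of s ↦ R_s at s₀, is symmetric: m(q,p) = m(p,q) for all q, p ∈ V. -/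
open Filter Topology
open scoped RealInnerProductSpace

/-!
Differentiating the isotropy identity `⟪J (q + R s q), p + R s p⟫ = 0` at `s₀`, where `R s₀ = 0`,
gives `⟪J (Ṙ q), p⟫ + ⟪J q, Ṙ p⟫ = 0`; skew-adjointness of `J` turns the first term into
`-⟪J p, Ṙ q⟫`.
-/

section

variable {X : Type*} [NormedAddCommGroup X] [InnerProductSpace ℝ X]

theorem ContinuousLinearMap.inner_apply_eq_neg_inner_apply_of_adjoint_eq_neg [CompleteSpace X]
    {J : X →L[ℝ] X} (hJ : ContinuousLinearMap.adjoint J = -J) (x y : X) :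
    ⟪J x, y⟫ = -⟪J y, x⟫ := by
  rw [← ContinuousLinearMap.adjoint_inner_right, hJ, neg_apply, inner_neg_right,
    real_inner_comm]

theorem hasDerivAt_add_subtype_apply {U W : Submodule ℝ X} {R : ℝ → U →L[ℝ] W}
    {R' : U →L[ℝ] W} {s₀ : ℝ} (hR : HasDerivAt R R' s₀) (u : U) :
    HasDerivAt (fun s => (u : X) + (R s u : X)) (R' u : X) s₀ :=
  (W.subtypeL.hasFDerivAt.comp_hasDerivAt s₀ (hR.clm_apply (hasDerivAt_const s₀ u))).const_add _
    |>.congr_deriv (by simp)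

theorem inner_apply_deriv_add_eq_zero_of_eventually_eq_zero (J : X →L[ℝ] X) {γ₁ γ₂ : ℝ → X}
    {γ₁' γ₂' : X} {s₀ : ℝ} (h₁ : HasDerivAt γ₁ γ₁' s₀) (h₂ : HasDerivAt γ₂ γ₂' s₀)
    (h : ∀ᶠ s in 𝓝 s₀, ⟪J (γ₁ s), γ₂ s⟫ = 0) :
    ⟪J (γ₁ s₀), γ₂'⟫ + ⟪J γ₁', γ₂ s₀⟫ = 0 :=
  ((J.hasFDerivAt.comp_hasDerivAt s₀ h₁).inner ℝ h₂).unique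
    ((hasDerivAt_const s₀ 0).congr_of_eventuallyEq h)

end

theorem maslov_crossing_form_symmetric_general
    {X : Type*} [NormedAddCommGroup X] [InnerProductSpace ℝ X] [CompleteSpace X]
    (J : X →L[ℝ] X) (hJadj : ContinuousLinearMap.adjoint J = -J)
    (ω : X → X → ℝ) (hω : ∀ u v : X, ω u v = ⟪J u, v⟫)
    (V : Submodule ℝ X) (s₀ : ℝ)
    (R : ℝ → (V →L[ℝ] (Vᗮ : Submodule ℝ X))) (R' : V →L[ℝ] (Vᗮ : Submodule ℝ X))
    (hderiv : HasDerivAt R R' s₀) (hR0 : R s₀ = 0)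
    (hiso : ∀ᶠ s in 𝓝 s₀, ∀ q p : V,
      ω ((q : X) + ((R s q : Vᗮ) : X)) ((p : X) + ((R s p : Vᗮ) : X)) = 0) :
    ∀ q p : V, ω (q : X) ((R' p : Vᗮ) : X) = ω (p : X) ((R' q : Vᗮ) : X) := by
  intro q p
  have hdiff := inner_apply_deriv_add_eq_zero_of_eventually_eq_zero J
    (hasDerivAt_add_subtype_apply hderiv q) (hasDerivAt_add_subtype_apply hderiv p)
    (hiso.mono fun s hs => by rw [← hω]; exact hs q p)
  simp only [hR0, zero_apply, ZeroMemClass.coe_zero, add_zero,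
    J.inner_apply_eq_neg_inner_apply_of_adjoint_eq_neg hJadj ((R' q : Vᗮ) : X)] at hdiff
  rw [hω, hω]
  linarith

/-- **Symmetry of the Maslov crossing form.** Let `J` be a complex structure compatible with
the symplectic form `ω(u,v) = ⟪Ju, v⟫` on a real Hilbert space `X`, let `V` be a closed
subspace with orthogonal complement `Vᗮ`, and let `s ↦ R s : V →L[ℝ] Vᗮ` be differentiable
at `s₀` with `R s₀ = 0`, such that the graph of `R s` is isotropic for `ω` for all `s` near
`s₀`. Then the crossing form `m(q,p) = ω(q, Ṙ(s₀) p)` is symmetric on `V`. -/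
theorem maslov_crossing_form_symmetric
    {X : Type*} [NormedAddCommGroup X] [InnerProductSpace ℝ X] [CompleteSpace X]
    (J : X →L[ℝ] X) (hJadj : ContinuousLinearMap.adjoint J = -J) (hJsq : J ∘L J = -1)
    (ω : X → X → ℝ) (hω : ∀ u v : X, ω u v = ⟪J u, v⟫)
    (V : Submodule ℝ X) (hV : IsClosed (V : Set X)) (s₀ : ℝ)
    (R : ℝ → (V →L[ℝ] (Vᗮ : Submodule ℝ X))) (R' : V →L[ℝ] (Vᗮ : Submodule ℝ X))
    (hderiv : HasDerivAt R R' s₀) (hR0 : R s₀ = 0)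
    (hiso : ∀ᶠ s in 𝓝 s₀, ∀ q p : V,
      ω ((q : X) + ((R s q : Vᗮ) : X)) ((p : X) + ((R s p : Vᗮ) : X)) = 0) :
    ∀ q p : V, ω (q : X) ((R' p : Vᗮ) : X) = ω (p : X) ((R' q : Vᗮ) : X) :=
  maslov_crossing_form_symmetric_general J hJadj ω hω V s₀ R R' hderiv hR0 hiso
end

section
/- Let X be a complex Hilbert space and let P and Q be orthogonal projections on X with ‖Q − P‖ < 1. Set D = Q − P. Then I − D² is a positive invertible operator, and the operators U = (I − D²)^{-1/2}((I − Q)(I − P) + Q P) and U' = (I − D²)^{-1/2}((I − P)(I − Q) + P Q) satisfy U U' = U' U = I and U P = Q U. In particular, U restricts to an isomorphism of the subspace ran(P) onto the subspace ran(Q). -/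
/-!
Write `V = (1 - Q)(1 - P) + QP` and `V' = (1 - P)(1 - Q) + PQ`. Idempotence of `P` and `Q` alone
gives `V V' = V' V = 1 - (Q - P)²`, `V P = QP = Q V`, and that `P`, `Q` commute with `(Q - P)²`.
Since `Q - P` is self-adjoint of norm `< 1`, `1 - (Q - P)²` is positive and invertible, so its
square root `S` is invertible; by the functional calculus `S`, hence `S⁻¹`, commutes with `P` and
`Q`, and therefore `(S⁻¹ V)(S⁻¹ V') = S⁻² V V' = S⁻² S² = 1`.
-/

open Set Function

theorem Function.Semiconj.bijOn_range_range {α β : Type*} {f : α → β} {fa : α → α}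
    {fb : β → β} (h : Semiconj f fa fb) (hf : Bijective f) : BijOn f (range fa) (range fb) := by
  have himage : f '' range fa = range fb := by
    rw [← range_comp, h.comp_eq, range_comp, hf.surjective.range_eq, image_univ]
  exact himage ▸ hf.injective.injOn.bijOn_image

theorem Commute.ring_inverse_left {M₀ : Type*} [MonoidWithZero M₀] {a b : M₀}
    (h : Commute a b) : Commute (Ring.inverse a) b := by
  by_cases ha : IsUnit a
  · obtain ⟨u, rfl⟩ := ha
    rw [Ring.inverse_unit]
    exact h.units_inv_left
  · rw [Ring.inverse_non_unit a ha]
    exact Commute.zero_left b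

theorem Ring.inverse_mul_mul_inverse_mul_of_mul_eq_mul_self {M₀ : Type*} [MonoidWithZero M₀]
    {s v w : M₀} (hs : IsUnit s) (hv : Commute (Ring.inverse s) v) (h : v * w = s * s) :
    Ring.inverse s * v * (Ring.inverse s * w) = 1 := by
  rw [mul_assoc, ← mul_assoc v, ← hv.eq, mul_assoc, h, ← mul_assoc _ s,
    Ring.inverse_mul_cancel s hs, one_mul, Ring.inverse_mul_cancel s hs]

section Ring

variable {R : Type*} [Ring R] {p q : R}

def katoIntertwiner (p q : R) : R := (1 - q) * (1 - p) + q * p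

theorem Commute.katoIntertwiner_right {a : R} (hp : Commute a p) (hq : Commute a q) :
    Commute a (katoIntertwiner p q) :=
  (((Commute.one_right a).sub_right hq).mul_right ((Commute.one_right a).sub_right hp)).add_right
    (hq.mul_right hp)

theorem IsIdempotentElem.commute_sub_sq (hp : IsIdempotentElem p) (hq : IsIdempotentElem q) :
    Commute p ((q - p) ^ 2) := by
  have hpp (x : R) : p * (p * x) = p * x := by rw [← mul_assoc, hp.eq]
  simp only [Commute, SemiconjBy, sq, mul_sub, sub_mul, mul_assoc, hp.eq, hq.eq, hpp]
  abel

theorem IsIdempotentElem.katoIntertwiner_mul_katoIntertwiner (hp : IsIdempotentElem p)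
    (hq : IsIdempotentElem q) : katoIntertwiner p q * katoIntertwiner q p = 1 - (q - p) ^ 2 := by
  have hpp (x : R) : p * (p * x) = p * x := by rw [← mul_assoc, hp.eq]
  simp only [katoIntertwiner, sq, mul_sub, sub_mul, mul_add, add_mul, mul_one, one_mul, mul_assoc,
    hp.eq, hq.eq, hpp]
  abel

theorem IsIdempotentElem.semiconjBy_katoIntertwiner (hp : IsIdempotentElem p)
    (hq : IsIdempotentElem q) : SemiconjBy (katoIntertwiner p q) p q := by
  rw [SemiconjBy]
  have hqq (x : R) : q * (q * x) = q * x := by rw [← mul_assoc, hq.eq]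
  simp only [katoIntertwiner, mul_sub, sub_mul, mul_add, add_mul, mul_one, one_mul, mul_assoc,
    hp.eq, hq.eq, hqq]
  abel

end Ring

theorem isUnit_one_sub_sq_of_norm_lt_one {R : Type*} [NormedRing R] [HasSummableGeomSeries R]
    {d : R} (h : ‖d‖ < 1) : IsUnit (1 - d ^ 2) :=
  isUnit_one_sub_of_norm_lt_one <|
    (norm_pow_le' d two_pos).trans_lt (pow_lt_one₀ (norm_nonneg d) h two_ne_zero)

section CStarAlgebra

variable {A : Type*} [CStarAlgebra A] [PartialOrder A] [StarOrderedRing A]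

theorem IsSelfAdjoint.one_sub_sq_nonneg {d : A} (hd : IsSelfAdjoint d) (h : ‖d‖ ≤ 1) :
    0 ≤ 1 - d ^ 2 := by
  have hsq : d ^ 2 ≤ algebraMap ℝ A (‖d‖ ^ 2) := by
    simpa only [hd.star_eq, sq] using CStarAlgebra.star_mul_le_algebraMap_norm_sq (a := d)
  have hle : algebraMap ℝ A (‖d‖ ^ 2) ≤ 1 := by
    simpa using algebraMap_mono A (pow_le_one₀ (norm_nonneg d) h)
  exact sub_nonneg.mpr (hsq.trans hle)

theorem IsIdempotentElem.commute_inverse_sqrt_one_sub_sub_sq {p q : A} (hp : IsIdempotentElem p)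
    (hq : IsIdempotentElem q) : Commute (Ring.inverse (CFC.sqrt (1 - (q - p) ^ 2))) p := by
  have h : Commute (1 - (q - p) ^ 2) p :=
    ((Commute.one_right p).sub_right (hp.commute_sub_sq hq)).symm
  rw [CFC.sqrt_eq_cfc]
  exact (h.cfc_nnreal _).ring_inverse_left

end CStarAlgebra

/-- **Kato's transformation operator for a pair of nearby orthogonal projections.**
If `P`, `Q` are orthogonal projections on a complex Hilbert space with `‖Q - P‖ < 1`
and `D = Q - P`, then `I - D²` is a positive invertible operator, and the operators
`U = (I - D²)^{-1/2}((I - Q)(I - P) + QP)` and `U' = (I - D²)^{-1/2}((I - P)(I - Q) + PQ)`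
are mutually inverse and satisfy `UP = QU`; in particular `U` restricts to an isomorphism
of `ran(P)` onto `ran(Q)`. Here `(I - D²)^{-1/2}` is the inverse of the positive square
root of `I - D²` given by the continuous functional calculus. -/
theorem kato_transformation_operator
    {X : Type*} [NormedAddCommGroup X] [InnerProductSpace ℂ X] [CompleteSpace X]
    (P Q : X →L[ℂ] X)
    (hPidem : P * P = P) (hPsa : ContinuousLinearMap.adjoint P = P)
    (hQidem : Q * Q = Q) (hQsa : ContinuousLinearMap.adjoint Q = Q)
    (hnorm : ‖Q - P‖ < 1) (D : X →L[ℂ] X) (hD : D = Q - P) :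
    (1 - D ^ 2).IsPositive ∧ IsUnit (1 - D ^ 2) ∧
    ∀ U U' : X →L[ℂ] X,
      U = Ring.inverse (CFC.sqrt (1 - D ^ 2)) * ((1 - Q) * (1 - P) + Q * P) →
      U' = Ring.inverse (CFC.sqrt (1 - D ^ 2)) * ((1 - P) * (1 - Q) + P * Q) →
      U * U' = 1 ∧ U' * U = 1 ∧ U * P = Q * U ∧
      Set.BijOn U (Set.range P) (Set.range Q) := by
  subst hD
  have hP : IsIdempotentElem P := hPidem
  have hQ : IsIdempotentElem Q := hQidem
  have hsa : IsSelfAdjoint (Q - P) :=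
    (ContinuousLinearMap.isSelfAdjoint_iff'.mpr hQsa).sub
      (ContinuousLinearMap.isSelfAdjoint_iff'.mpr hPsa)
  have hpos : 0 ≤ 1 - (Q - P) ^ 2 := hsa.one_sub_sq_nonneg hnorm.le
  have hunit : IsUnit (1 - (Q - P) ^ 2) := isUnit_one_sub_sq_of_norm_lt_one hnorm
  refine ⟨(ContinuousLinearMap.nonneg_iff_isPositive _).mp hpos, hunit, ?_⟩
  rintro U U' rfl rfl
  set S := CFC.sqrt (1 - (Q - P) ^ 2)
  have hS : IsUnit S := (CFC.isUnit_sqrt_iff _ hpos).mpr hunit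
  have hSS : S * S = 1 - (Q - P) ^ 2 := CFC.sqrt_mul_sqrt_self _ hpos
  have hTP : Commute (Ring.inverse S) P := hP.commute_inverse_sqrt_one_sub_sub_sq hQ
  have hTQ : Commute (Ring.inverse S) Q := by
    simpa only [← neg_sub Q P, neg_sq] using hQ.commute_inverse_sqrt_one_sub_sub_sq hP
  have hUU' := Ring.inverse_mul_mul_inverse_mul_of_mul_eq_mul_self hS
    (hTP.katoIntertwiner_right hTQ) (hSS ▸ hP.katoIntertwiner_mul_katoIntertwiner hQ)
  have hU'U := Ring.inverse_mul_mul_inverse_mul_of_mul_eq_mul_self hS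
    (hTQ.katoIntertwiner_right hTP) (by
      rw [hQ.katoIntertwiner_mul_katoIntertwiner hP, hSS, ← neg_sub Q P, neg_sq])
  have hUP := SemiconjBy.mul_left hTQ (hP.semiconjBy_katoIntertwiner hQ)
  refine ⟨hUU', hU'U, hUP, ?_⟩
  exact Semiconj.bijOn_range_range (fun x => congr($hUP x))
    (bijective_iff_has_inverse.mpr
      ⟨Ring.inverse S * katoIntertwiner Q P, fun x => congr($hU'U x), fun x => congr($hUU' x)⟩)
end

section
/- Let X be a complex Hilbert space, t₀ ∈ ℝ, P an orthogonal projection on X, and for t near t₀ let Q(t) be orthogonal projections on X such that D(t) := Q(t) − P satisfies ‖D(t)‖ = O(|t − t₀|) as t → t₀. For t near t₀ define U(t) = (I − D(t)²)^{-1/2}((I − Q(t))(I − P) + Q(t) P). Then P U(t) P = P Q(t) P + (1/2) P D(t)² P + O(|t − t₀|³) as t → t₀, i.e. ‖P U(t) P − P Q(t) P − (1/2) P D(t)² P‖ = O(|t − t₀|³). -/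
/-!
Write `D = Q - P`. Since `((1 - Q)(1 - P) + QP) P = QP`, the compression is
`P (1 - D²)^{-1/2} Q P`. Expanding `(1 - D²)^{-1/2} = 1 + D²/2 + O(‖D‖⁴)` through the continuous
functional calculus gives `PQP + ½ P D² Q P + O(‖D‖⁴)`, and `P D² Q P - P D² P = P D³ P` because
`D P = Q P - P`. Hence the error is `O(‖D‖³) = O(|t - t₀|³)`.
-/

open Filter Topology Asymptotics

lemma Real.abs_inv_sqrt_one_sub_sub_le {x : ℝ} (hx₀ : 0 ≤ x) (hx : x ≤ 1 / 4) :
    |(√(1 - x))⁻¹ - 1 - 1 / 2 * x| ≤ 2 * x ^ 2 := by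
  have hy₀ : 0 < √(1 - x) := Real.sqrt_pos.2 (by linarith)
  have hy₂ : √(1 - x) ^ 2 = 1 - x := Real.sq_sqrt (by linarith)
  have hyy : √(1 - x) * (√(1 - x))⁻¹ = 1 := mul_inv_cancel₀ hy₀.ne'
  set y := √(1 - x)
  rw [show x = 1 - y ^ 2 by linarith]
  have hy : 1 / 2 ≤ y := by nlinarith
  rw [abs_le]
  constructor
  · nlinarith [sq_nonneg (1 - y), sq_nonneg (1 + y)]
  · nlinarith [sq_nonneg (1 - y), sq_nonneg (1 + y), sq_nonneg ((1 - y) * (1 + y))]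

lemma IsStarProjection.norm_mul_mul_le {E : Type*} [NonUnitalNormedRing E] [StarRing E]
    [CStarRing E] {p : E} (hp : IsStarProjection p) (x : E) : ‖p * x * p‖ ≤ ‖x‖ :=
  calc ‖p * x * p‖ ≤ ‖p‖ * ‖x‖ * ‖p‖ := norm_mul₃_le
    _ ≤ 1 * ‖x‖ * 1 := by gcongr <;> exact hp.norm_le
    _ = ‖x‖ := by ring

section CStarAlgebra

variable {A : Type*} [CStarAlgebra A] [PartialOrder A] [StarOrderedRing A]

lemma mem_Icc_norm_of_mem_spectrum_of_nonneg {a : A} (ha : 0 ≤ a) {x : ℝ}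
    (hx : x ∈ spectrum ℝ a) : x ∈ Set.Icc 0 ‖a‖ :=
  ⟨spectrum_nonneg_of_nonneg ha hx,
    (le_algebraMap_iff_spectrum_le (ha := ha.isSelfAdjoint)).1
      (IsSelfAdjoint.le_algebraMap_norm_self ha.isSelfAdjoint) x hx⟩

lemma CFC.sqrt_one_sub_eq_cfc {a : A} (ha : 0 ≤ a) (ha₁ : ‖a‖ ≤ 1) :
    CFC.sqrt (1 - a) = cfc (fun x : ℝ ↦ √(1 - x)) a := by
  refine CFC.sqrt_unique ?_ (cfc_nonneg fun x _ ↦ Real.sqrt_nonneg _)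
  rw [← cfc_mul .., cfc_congr (g := fun x : ℝ ↦ 1 - x) fun x hx ↦ Real.mul_self_sqrt
    (by linarith [(mem_Icc_norm_of_mem_spectrum_of_nonneg ha hx).2]), cfc_sub ..,
    cfc_const_one ℝ a, cfc_id' ℝ a]

lemma CFC.inverse_sqrt_one_sub_eq_cfc {a : A} (ha : 0 ≤ a) (ha₁ : ‖a‖ < 1) :
    Ring.inverse (CFC.sqrt (1 - a)) = cfc (fun x : ℝ ↦ (√(1 - x))⁻¹) a := by
  rw [CFC.sqrt_one_sub_eq_cfc ha ha₁.le]
  refine (cfc_inv _ _ fun x hx ↦ (Real.sqrt_pos.2 ?_).ne').symm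
  linarith [(mem_Icc_norm_of_mem_spectrum_of_nonneg ha hx).2]

lemma CFC.norm_inverse_sqrt_one_sub_sub_le {a : A} (ha : 0 ≤ a) (ha₁ : ‖a‖ ≤ 1 / 4) :
    ‖Ring.inverse (CFC.sqrt (1 - a)) - 1 - (1 / 2 : ℝ) • a‖ ≤ 2 * ‖a‖ ^ 2 := by
  have hcfc : Ring.inverse (CFC.sqrt (1 - a)) - 1 - (1 / 2 : ℝ) • a
      = cfc (fun x : ℝ ↦ (√(1 - x))⁻¹ - 1 - 1 / 2 * x) a := by
    have hcont : ContinuousOn (fun x : ℝ ↦ (√(1 - x))⁻¹) (spectrum ℝ a) :=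
      ContinuousOn.inv₀ (by fun_prop) fun x hx ↦ (Real.sqrt_pos.2 (by
        linarith [(mem_Icc_norm_of_mem_spectrum_of_nonneg ha hx).2])).ne'
    rw [CFC.inverse_sqrt_one_sub_eq_cfc ha (by linarith),
      cfc_sub (fun x : ℝ ↦ (√(1 - x))⁻¹ - 1) (fun x ↦ 1 / 2 * x) a (hcont.sub continuousOn_const),
      cfc_sub _ _ a hcont, cfc_const_one ℝ a, cfc_const_mul_id (1 / 2 : ℝ) a]
  rw [hcfc]
  refine norm_cfc_le (by positivity) fun x hx ↦ ?_
  obtain ⟨hx₀, hxa⟩ := mem_Icc_norm_of_mem_spectrum_of_nonneg ha hx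
  calc ‖(√(1 - x))⁻¹ - 1 - 1 / 2 * x‖ = |(√(1 - x))⁻¹ - 1 - 1 / 2 * x| := Real.norm_eq_abs _
    _ ≤ 2 * x ^ 2 := Real.abs_inv_sqrt_one_sub_sub_le hx₀ (hxa.trans ha₁)
    _ ≤ 2 * ‖a‖ ^ 2 := by gcongr

/-- Kato's transformation operator, mapping the range of `p` unitarily onto that of `q`. -/
noncomputable def transformationOperator (p q : A) : A :=
  Ring.inverse (CFC.sqrt (1 - (q - p) ^ 2)) * ((1 - q) * (1 - p) + q * p)

lemma compression_transformationOperator_sub_eq {p q : A} (hp : IsIdempotentElem p) :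
    p * transformationOperator p q * p - (p * q * p + (1 / 2 : ℂ) • (p * (q - p) ^ 2 * p)) =
      (1 / 2 : ℂ) • (p * (q - p) ^ 3 * p) + p *
        ((Ring.inverse (CFC.sqrt (1 - (q - p) ^ 2)) - 1 - (1 / 2 : ℂ) • (q - p) ^ 2) * q) * p := by
  have h₀ : (1 - p) * p = 0 := by rw [sub_mul, one_mul, hp.eq, sub_self]
  have hW : ((1 - q) * (1 - p) + q * p) * p = q * p := by
    rw [add_mul, mul_assoc, mul_assoc, hp.eq, h₀, mul_zero, zero_add]
  have hD : p * (q - p) ^ 3 * p = p * (q - p) ^ 2 * (q * p - p) :=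
    calc p * (q - p) ^ 3 * p = p * (q - p) ^ 2 * ((q - p) * p) := by noncomm_ring
      _ = p * (q - p) ^ 2 * (q * p - p) := by rw [sub_mul, hp.eq]
  rw [transformationOperator, mul_assoc _ _ p, mul_assoc _ _ p, hW, hD]
  generalize Ring.inverse (CFC.sqrt (1 - (q - p) ^ 2)) = v
  generalize (q - p) ^ 2 = e
  simp only [smul_mul_assoc, mul_smul_comm, sub_mul, mul_sub, smul_sub, one_mul]
  noncomm_ring

lemma IsStarProjection.norm_compression_transformationOperator_sub_le {p q : A}
    (hp : IsStarProjection p) (hq : IsStarProjection q) (hpq : ‖q - p‖ ≤ 1 / 2) :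
    ‖p * transformationOperator p q * p - (p * q * p + (1 / 2 : ℂ) • (p * (q - p) ^ 2 * p))‖ ≤
      2 * ‖q - p‖ ^ 3 := by
  set d := q - p
  have hd₀ : 0 ≤ ‖d‖ := norm_nonneg d
  have hd2 : ‖d ^ 2‖ ≤ ‖d‖ ^ 2 := norm_pow_le' d two_pos
  have hhalf : ∀ x : A, (1 / 2 : ℂ) • x = (1 / 2 : ℝ) • x := fun x ↦ by
    rw [← Complex.coe_smul]; norm_num
  have hE : ‖Ring.inverse (CFC.sqrt (1 - d ^ 2)) - 1 - (1 / 2 : ℂ) • d ^ 2‖ ≤ 2 * ‖d‖ ^ 4 := by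
    rw [hhalf]
    refine (CFC.norm_inverse_sqrt_one_sub_sub_le
      (hq.isSelfAdjoint.sub hp.isSelfAdjoint).sq_nonneg (by nlinarith)).trans ?_
    nlinarith [norm_nonneg (d ^ 2)]
  rw [compression_transformationOperator_sub_eq hp.isIdempotentElem]
  calc _ ≤ ‖(1 / 2 : ℂ) • (p * d ^ 3 * p)‖ +
        ‖p * ((Ring.inverse (CFC.sqrt (1 - d ^ 2)) - 1 - (1 / 2 : ℂ) • d ^ 2) * q) * p‖ :=
        norm_add_le _ _
    _ ≤ 1 / 2 * ‖d‖ ^ 3 + 2 * ‖d‖ ^ 4 := by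
      gcongr
      · rw [hhalf, norm_smul, Real.norm_of_nonneg (by norm_num)]
        gcongr
        exact (hp.norm_mul_mul_le _).trans (norm_pow_le' d three_pos)
      · refine (hp.norm_mul_mul_le _).trans ((norm_mul_le _ _).trans ?_)
        calc _ ≤ 2 * ‖d‖ ^ 4 * 1 := by gcongr; exact hq.norm_le
          _ = 2 * ‖d‖ ^ 4 := mul_one _
    _ ≤ 2 * ‖d‖ ^ 3 := by nlinarith [pow_nonneg hd₀ 3]

end CStarAlgebra

/-- **Second-order expansion of `P U(t) P`.** If `P` is an orthogonal projection and `Q t`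
are orthogonal projections with `D t = Q t - P = O(|t - t₀|)`, then the transformation
operator `U(t) = (I - D(t)²)^{-1/2}((I - Q(t))(I - P) + Q(t)P)` satisfies
`P U(t) P = P Q(t) P + (1/2) P D(t)² P + O(|t - t₀|³)` as `t → t₀`. -/
theorem compressed_transformation_operator_second_order_expansion
    {X : Type*} [NormedAddCommGroup X] [InnerProductSpace ℂ X] [CompleteSpace X]
    (t₀ : ℝ) (P : X →L[ℂ] X) (hPidem : P * P = P) (hPsa : ContinuousLinearMap.adjoint P = P)
    (Q : ℝ → X →L[ℂ] X)
    (hQ : ∀ᶠ t in 𝓝 t₀, Q t * Q t = Q t ∧ ContinuousLinearMap.adjoint (Q t) = Q t)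
    (hD : (fun t => Q t - P) =O[𝓝 t₀] fun t => t - t₀) :
    (fun t => P * (Ring.inverse (CFC.sqrt (1 - (Q t - P) ^ 2))
          * ((1 - Q t) * (1 - P) + Q t * P)) * P
        - (P * Q t * P + (1 / 2 : ℂ) • (P * (Q t - P) ^ 2 * P)))
      =O[𝓝 t₀] fun t => (t - t₀) ^ 3 := by
  have hP : IsStarProjection P := ⟨hPidem, ContinuousLinearMap.isSelfAdjoint_iff'.2 hPsa⟩
  have hD₀ : Tendsto (fun t => ‖Q t - P‖) (𝓝 t₀) (𝓝 0) := by
    simpa using (hD.trans_tendsto (tendsto_sub_nhds_zero_iff.2 tendsto_id)).norm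
  have hbound : ∀ᶠ t in 𝓝 t₀, ‖P * transformationOperator P (Q t) * P
      - (P * Q t * P + (1 / 2 : ℂ) • (P * (Q t - P) ^ 2 * P))‖ ≤ 2 * ‖Q t - P‖ ^ 3 := by
    filter_upwards [hQ, hD₀.eventually (ge_mem_nhds one_half_pos)] with t ⟨hQidem, hQsa⟩ ht
    exact hP.norm_compression_transformationOperator_sub_le
      ⟨hQidem, ContinuousLinearMap.isSelfAdjoint_iff'.2 hQsa⟩ ht
  exact (IsBigO.of_norm_eventuallyLE hbound).trans ((hD.norm_left.pow 3).const_mul_left 2)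
end
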